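/- Let λ > 0 and w be real constants, and define y_B = ((√(λ⁴+36) - λ²)/6)^{1/2} and x_B = λ y_B/√3. Then: (i) 0 < y_B < 1, 0 < x_B < 1, and y_B² = √(1-x_B²), i.e. the tachyonic relative energy density Ω_φ = y_B²/√(1-x_B²) equals 1 at the point (x_B, y_B); (ii) the point (x_B, y_B) is a zero of the tachyon vector field x' = (x²-1)(3x - √3λy), y' = -(y/2)[3y²(w-x²+1)/√(1-x²) - 3(w+1) + √3λxy]; (iii) the effective equation of state at this point equals w_eff = -1 + λ²y_B²/3 = -1 + x_B²; (iv) w_eff < -1/3 (accelerated expansion) holds if and only if λ² < 2√3, i.e. λ⁴ < 12. -/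
import Mathlib


/-- The `y`-coordinate of the tachyon attractor point `B`. -/
noncomputable def yB8 (lam : ℝ) : ℝ := Real.sqrt ((Real.sqrt (lam ^ 4 + 36) - lam ^ 2) / 6)

/-- The `x`-coordinate of the tachyon attractor point `B`. -/
noncomputable def xB8 (lam : ℝ) : ℝ := lam * yB8 lam / Real.sqrt 3

/-- `x`-component of the tachyon (inverse square potential) vector field. -/
noncomputable def t8x (lam x y : ℝ) : ℝ := (x ^ 2 - 1) * (3 * x - Real.sqrt 3 * lam * y)

/-- `y`-component of the tachyon (inverse square potential) vector field. -/
noncomputable def t8y (w lam x y : ℝ) : ℝ :=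
  -(y / 2) * (3 * y ^ 2 * (w - x ^ 2 + 1) / Real.sqrt (1 - x ^ 2) - 3 * (w + 1)
    + Real.sqrt 3 * lam * x * y)

set_option maxHeartbeats 1000000 in
/-- The tachyon dominated point `B = (λ y_B/√3, y_B)` with
`y_B = ((√(λ⁴+36)-λ²)/6)^{1/2}`: it lies in the phase space with `Ω_φ = 1`, is a fixed point
of the tachyon system, has `w_eff = -1 + λ² y_B²/3 = -1 + x_B²`, and describes an accelerating
universe iff `λ² < 2√3`, i.e. iff `λ⁴ < 12`. -/
theorem tachyon_point_B (lam w : ℝ) (hlam : 0 < lam) :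
    (0 < yB8 lam ∧ yB8 lam < 1 ∧ 0 < xB8 lam ∧ xB8 lam < 1 ∧
      (yB8 lam) ^ 2 = Real.sqrt (1 - (xB8 lam) ^ 2) ∧
      (yB8 lam) ^ 2 / Real.sqrt (1 - (xB8 lam) ^ 2) = 1) ∧
    (t8x lam (xB8 lam) (yB8 lam) = 0 ∧ t8y w lam (xB8 lam) (yB8 lam) = 0) ∧
    (w * (1 - (yB8 lam) ^ 2 / Real.sqrt (1 - (xB8 lam) ^ 2))
        - (yB8 lam) ^ 2 * Real.sqrt (1 - (xB8 lam) ^ 2)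
        = -1 + lam ^ 2 * (yB8 lam) ^ 2 / 3 ∧
      -1 + lam ^ 2 * (yB8 lam) ^ 2 / 3 = -1 + (xB8 lam) ^ 2) ∧
    ((-1 + (xB8 lam) ^ 2 < -(1 / 3) ↔ lam ^ 2 < 2 * Real.sqrt 3) ∧
      (lam ^ 2 < 2 * Real.sqrt 3 ↔ lam ^ 4 < 12)) := by
  set s := Real.sqrt (lam ^ 4 + 36) with hs
  have hsnn : 0 ≤ lam ^ 4 + 36 := by positivity
  have hs2 : s ^ 2 = lam ^ 4 + 36 := Real.sq_sqrt hsnn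
  have hspos : 0 < s := Real.sqrt_pos.mpr (by positivity)
  clear_value s
  have hsgt : lam ^ 2 < s := by nlinarith [sq_nonneg (s - lam ^ 2)]
  set u := (s - lam ^ 2) / 6 with hu
  clear_value u
  have hupos : 0 < u := by rw [hu]; linarith
  have hupos' : 0 < (Real.sqrt (lam ^ 4 + 36) - lam ^ 2) / 6 := by
    rw [← hs, ← hu]; exact hupos
  have hquad : u ^ 2 + lam ^ 2 * u / 3 = 1 := by
    rw [hu]; linear_combination (1 / 36) * hs2
  have hult : u < 1 := by nlinarith
  have hy2 : yB8 lam ^ 2 = u := by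
    rw [yB8, Real.sq_sqrt hupos'.le, hu, hs]
  have hypos : 0 < yB8 lam := Real.sqrt_pos.mpr hupos'
  have h3 : Real.sqrt 3 ^ 2 = 3 := Real.sq_sqrt (by norm_num)
  have h3pos : (0:ℝ) < Real.sqrt 3 := Real.sqrt_pos.mpr (by norm_num)
  have hx2 : xB8 lam ^ 2 = lam ^ 2 * u / 3 := by
    rw [xB8, div_pow, mul_pow, hy2, h3]
  have hxpos : 0 < xB8 lam := by rw [xB8]; positivity
  have h1x : 1 - xB8 lam ^ 2 = u ^ 2 := by rw [hx2]; linarith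
  have hroot : Real.sqrt (1 - xB8 lam ^ 2) = u := by
    rw [h1x, Real.sqrt_sq hupos.le]
  have hxlt : xB8 lam < 1 := by nlinarith [hx2, hxpos, hupos]
  have hylt : yB8 lam < 1 := by nlinarith [hy2, hypos]
  have hm : Real.sqrt 3 * Real.sqrt 3 = 3 := Real.mul_self_sqrt (by norm_num)
  have h3x : 3 * xB8 lam = Real.sqrt 3 * lam * yB8 lam := by
    rw [xB8, mul_div_assoc', div_eq_iff h3pos.ne']
    linear_combination (-(lam * yB8 lam)) * hm
  have hsx : Real.sqrt 3 * lam * xB8 lam * yB8 lam = 3 * xB8 lam ^ 2 := by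
    linear_combination (-(xB8 lam)) * h3x
  have hpow : lam ^ 4 = (lam ^ 2) ^ 2 := by ring
  have h12' : (2 * Real.sqrt 3) * (2 * Real.sqrt 3) = 12 := by
    linear_combination 4 * hm
  have hiff2 : lam ^ 2 < 2 * Real.sqrt 3 ↔ lam ^ 4 < 12 := by
    constructor
    · intro h
      have h2 := mul_self_lt_mul_self (sq_nonneg lam) h
      rw [h12'] at h2
      nlinarith [h2]
    · intro h
      by_contra hc
      push_neg at hc
      have h2 := mul_self_le_mul_self (by positivity) hc
      rw [h12'] at h2
      nlinarith [h2]
  refine ⟨⟨hypos, hylt, hxpos, hxlt, by rw [hroot, hy2],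
    (by rw [hroot, hy2, div_self hupos.ne'])⟩, ⟨?_, ?_⟩, ⟨?_, ?_⟩, ?_, hiff2⟩
  · rw [t8x, h3x]; ring
  · rw [t8y, hroot, hy2]
    have hdiv : 3 * u * (w - xB8 lam ^ 2 + 1) / u = 3 * (w - xB8 lam ^ 2 + 1) := by
      field_simp
    rw [hdiv]
    linear_combination (-(yB8 lam) / 2) * hsx
  · rw [hroot, hy2, div_self hupos.ne']
    linear_combination -hquad
  · rw [hy2, hx2]
  · rw [hiff2, hx2]
    constructor
    · intro h
      have hlu : lam ^ 2 * u < 2 := by linarith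
      have key : lam ^ 2 * s < 12 + lam ^ 4 := by
        rw [hu] at hlu; ring_nf at hlu ⊢; linarith
      have h2 := mul_self_lt_mul_self (by positivity) key
      have e1 : (lam ^ 2 * s) * (lam ^ 2 * s) = lam ^ 4 * (lam ^ 4 + 36) := by
        linear_combination lam ^ 4 * hs2
      rw [e1] at h2
      nlinarith [h2]
    · intro h12
      have key : lam ^ 2 * s < 12 + lam ^ 4 := by
        by_contra hc
        push_neg at hc
        have h2 := mul_self_le_mul_self (by positivity) hc
        have e1 : (lam ^ 2 * s) * (lam ^ 2 * s) = lam ^ 4 * (lam ^ 4 + 36) := by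
          linear_combination lam ^ 4 * hs2
        rw [e1] at h2
        nlinarith [h2]
      have : lam ^ 2 * u < 2 := by rw [hu]; ring_nf at key ⊢; linarith
      linarith
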